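/- Let G be a graph with n ≥ 10 vertices containing a path segment with edges {u',u}, {u,w}, {w,w'}, where the vertices u and w have no edges other than these (deg(u) = deg(w) = 2). If there is an optimum bisection vector y (cw(y) = bw(G)) such that y_u = y_{u'} = +1 and y_w = y_{w'} = −1 (so {u,w} is a cut edge), then h(G) < bw(G). -/

import Mathlib

open Matrix BigOperators Finset

noncomputable section

/-- Adjacency matrix of a graph on `Fin n`, with real entries. -/
def adjA {n : ℕ} (G : SimpleGraph (Fin n)) [DecidableRel G.Adj] :
    Matrix (Fin n) (Fin n) ℝ :=
  Matrix.of fun i j => if G.Adj i j then (1 : ℝ) else 0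

/-- A bisection vector: entries in `{+1, -1}` summing to zero. -/
def IsBisection {n : ℕ} (x : Fin n → ℝ) : Prop :=
  (∀ i, x i = 1 ∨ x i = -1) ∧ ∑ i, x i = 0

/-- Cut width of a `±1` vector: `∑_{{i,j}∈E} (1 - x_i x_j)/2`, written as a sum
over ordered pairs (each edge counted twice, hence the `/4`). -/
def cw {n : ℕ} (G : SimpleGraph (Fin n)) [DecidableRel G.Adj] (x : Fin n → ℝ) : ℝ :=
  (∑ i, ∑ j, adjA G i j * (1 - x i * x j)) / 4

/-- Bisection width: minimum cut width over all bisection vectors. -/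
def bw {n : ℕ} (G : SimpleGraph (Fin n)) [DecidableRel G.Adj] : ℝ :=
  sInf {c | ∃ x : Fin n → ℝ, IsBisection x ∧ cw G x = c}

/-- `λ_S(B)`: supremum of the Rayleigh quotient of `B` over nonzero vectors of
coordinate sum zero. -/
def lamS {n : ℕ} (B : Matrix (Fin n) (Fin n) ℝ) : ℝ :=
  sSup {r | ∃ x : Fin n → ℝ, x ≠ 0 ∧ ∑ i, x i = 0 ∧
    r = (x ⬝ᵥ B.mulVec x) / (∑ i, (x i) ^ 2)}

/-- Sum of all entries of a matrix. -/
def msum {n : ℕ} (M : Matrix (Fin n) (Fin n) ℝ) : ℝ := ∑ i, ∑ j, M i j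

/-- Boppana's function `g(G,d)`. -/
def gB {n : ℕ} (G : SimpleGraph (Fin n)) [DecidableRel G.Adj] (d : Fin n → ℝ) : ℝ :=
  (msum (adjA G + Matrix.diagonal d) - n * lamS (adjA G + Matrix.diagonal d)) / 4

/-- Boppana's lower bound `h(G) = sup_d g(G,d)`. -/
def hB {n : ℕ} (G : SimpleGraph (Fin n)) [DecidableRel G.Adj] : ℝ :=
  sSup {r | ∃ d : Fin n → ℝ, r = gB G d}

/-! Write `B = A + diag d` and `L = λ_S(B)`. For a `±1` vector `y` one has
`g(G,d) = cw(y) + (yᵀBy - nL)/4`, so it suffices to show `yᵀBy ≤ nL - 1/100` for every `d`.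
Test vectors that differ from combinations of `y` and `𝟙` only at `u` and `w` see only the rows
of `B` at `u` and `w`, which are known because `u` and `w` have degree two. If
`yᵀBy > nL - 1/100`, pulling `y` towards zero on the cut edge, `10y + e_w - e_u`, gives
`d_u + d_w > 2L - 3/19`. Then, as `𝟙ᵀB𝟙 ≥ yᵀBy`, the vector `n(e_u + e_w) - 2𝟙`, which is `n`
times the projection of `e_u + e_w` onto `S`, has Rayleigh quotient about
`(d_u + d_w + 2)/2 > L`, once `n ≥ 10`. -/

section Rayleigh

variable {ι : Type*} [Fintype ι]

theorem Matrix.IsSymm.dotProduct_mulVec_comm {B : Matrix ι ι ℝ} (hB : B.IsSymm)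
    (v w : ι → ℝ) : w ⬝ᵥ B *ᵥ v = v ⬝ᵥ B *ᵥ w := by
  rw [dotProduct_mulVec, ← mulVec_transpose, hB.eq, dotProduct_comm]

theorem Matrix.IsSymm.dotProduct_mulVec_smul_add_smul {B : Matrix ι ι ℝ} (hB : B.IsSymm)
    (a b : ℝ) (v w : ι → ℝ) :
    (a • v + b • w) ⬝ᵥ B *ᵥ (a • v + b • w) =
      a ^ 2 * (v ⬝ᵥ B *ᵥ v) + 2 * a * b * (v ⬝ᵥ B *ᵥ w) + b ^ 2 * (w ⬝ᵥ B *ᵥ w) := by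
  simp only [mulVec_add, mulVec_smul, dotProduct_add, add_dotProduct, dotProduct_smul,
    smul_dotProduct, smul_eq_mul, hB.dotProduct_mulVec_comm v w]
  ring

theorem dotProduct_smul_add_smul_self (a b : ℝ) (v w : ι → ℝ) :
    (a • v + b • w) ⬝ᵥ (a • v + b • w) =
      a ^ 2 * (v ⬝ᵥ v) + 2 * a * b * (v ⬝ᵥ w) + b ^ 2 * (w ⬝ᵥ w) := by
  classical
  simpa using (isSymm_one (n := ι) (α := ℝ)).dotProduct_mulVec_smul_add_smul a b v w

theorem dotProduct_mulVec_self_le_sum_abs_mul (B : Matrix ι ι ℝ) (x : ι → ℝ) :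
    x ⬝ᵥ B *ᵥ x ≤ (∑ i, ∑ j, |B i j|) * (x ⬝ᵥ x) := by
  have hsq : ∀ i, x i ^ 2 ≤ x ⬝ᵥ x := fun i => by
    simpa [dotProduct, sq] using
      Finset.single_le_sum (f := fun k => x k * x k) (fun k _ => mul_self_nonneg _)
        (Finset.mem_univ i)
  have hxij : ∀ i j, |x i * x j| ≤ x ⬝ᵥ x := fun i j => by
    rw [abs_mul]
    nlinarith [two_mul_le_add_sq |x i| |x j|, sq_abs (x i), sq_abs (x j), hsq i, hsq j]
  calc x ⬝ᵥ B *ᵥ x = ∑ i, ∑ j, B i j * (x i * x j) := by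
        simp only [dotProduct, mulVec, Finset.mul_sum]
        exact Finset.sum_congr rfl fun i _ => Finset.sum_congr rfl fun j _ => by ring
    _ ≤ ∑ i, ∑ j, |B i j| * (x ⬝ᵥ x) := by
        refine Finset.sum_le_sum fun i _ => Finset.sum_le_sum fun j _ => ?_
        exact (le_abs_self _).trans <| (abs_mul _ _).trans_le <|
          mul_le_mul_of_nonneg_left (hxij i j) (abs_nonneg _)
    _ = _ := by simp only [Finset.sum_mul]

end Rayleigh

theorem dotProduct_mulVec_le_lamS_mul {n : ℕ} (B : Matrix (Fin n) (Fin n) ℝ)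
    {x : Fin n → ℝ} (hx : ∑ i, x i = 0) : x ⬝ᵥ B *ᵥ x ≤ lamS B * (x ⬝ᵥ x) := by
  rcases eq_or_ne x 0 with rfl | hx0
  · simp
  have hpos : 0 < x ⬝ᵥ x := dotProduct_self_star_pos_iff.mpr hx0
  have hnorm : ∑ i, x i ^ 2 = x ⬝ᵥ x := by simp [dotProduct, sq]
  have hbdd : BddAbove {r | ∃ z : Fin n → ℝ, z ≠ 0 ∧ ∑ i, z i = 0 ∧
      r = (z ⬝ᵥ B *ᵥ z) / (∑ i, (z i) ^ 2)} := by
    refine ⟨∑ i, ∑ j, |B i j|, ?_⟩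
    rintro r ⟨z, hz, -, rfl⟩
    have hzpos : 0 < z ⬝ᵥ z := dotProduct_self_star_pos_iff.mpr hz
    rw [show ∑ i, z i ^ 2 = z ⬝ᵥ z by simp [dotProduct, sq], div_le_iff₀ hzpos]
    exact dotProduct_mulVec_self_le_sum_abs_mul B z
  have := le_csSup hbdd ⟨x, hx0, hx, rfl⟩
  rwa [hnorm, div_le_iff₀ hpos] at this

theorem rayleigh_gap_of_test_bounds {N L q t s : ℝ} (hN : 10 ≤ N) (hqt : q ≤ t)
    (h1 : 100 * q - 19 * s - 2 ≤ L * (100 * N - 38))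
    (h2 : N ^ 2 * (s + 2) - 4 * N * (s + 4) + 4 * t ≤ L * (2 * N ^ 2 - 4 * N)) :
    q ≤ N * L - 1 / 100 := by
  by_contra! hq
  have hs : 38 * L - 3 < 19 * s := by nlinarith
  have hN4 : 0 < N ^ 2 - 4 * N := by nlinarith
  nlinarith [mul_pos hN4 (by linarith : 0 < 19 * s + 3 - 38 * L)]

section Bisection

variable {n : ℕ} (G : SimpleGraph (Fin n)) [DecidableRel G.Adj]

theorem adjA_eq_adjMatrix : adjA G = G.adjMatrix ℝ := by
  ext i j
  simp [adjA, SimpleGraph.adjMatrix_apply]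

theorem isSymm_adjA_add_diagonal (d : Fin n → ℝ) : (adjA G + diagonal d).IsSymm :=
  (adjA_eq_adjMatrix G ▸ G.isSymm_adjMatrix).add (isSymm_diagonal d)

theorem gB_eq (d : Fin n → ℝ) : gB G d =
    (1 ⬝ᵥ (adjA G + diagonal d) *ᵥ 1 - n * lamS (adjA G + diagonal d)) / 4 := by
  simp [gB, msum, mulVec, dotProduct]

theorem cw_nonneg {y : Fin n → ℝ} (hy : ∀ i, y i = 1 ∨ y i = -1) : 0 ≤ cw G y := by
  refine div_nonneg (Finset.sum_nonneg fun i _ => Finset.sum_nonneg fun j _ => ?_) zero_le_four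
  have hA : 0 ≤ adjA G i j := by simp only [adjA, of_apply]; split_ifs <;> norm_num
  have hyy : y i * y j ≤ 1 := by
    rcases hy i with h | h <;> rcases hy j with h' | h' <;> simp [h, h']
  exact mul_nonneg hA (by linarith)

theorem cw_eq (d : Fin n → ℝ) {y : Fin n → ℝ} (hy : ∀ i, y i = 1 ∨ y i = -1) :
    cw G y = (1 ⬝ᵥ (adjA G + diagonal d) *ᵥ 1 - y ⬝ᵥ (adjA G + diagonal d) *ᵥ y) / 4 := by
  have hdiag : y ⬝ᵥ diagonal d *ᵥ y = 1 ⬝ᵥ diagonal d *ᵥ 1 := by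
    simp only [mulVec_diagonal, dotProduct]
    refine Finset.sum_congr rfl fun i _ => ?_
    rcases hy i with h | h <;> simp [h]
  rw [add_mulVec, add_mulVec, dotProduct_add, dotProduct_add, hdiag, add_sub_add_right_eq_sub, cw]
  congr 1
  simp only [dotProduct, mulVec, Finset.mul_sum, ← Finset.sum_sub_distrib]
  refine Finset.sum_congr rfl fun i _ => Finset.sum_congr rfl fun j _ => ?_
  simp only [Pi.one_apply]
  ring

theorem adjA_add_diagonal_mulVec_apply_of_adj_iff {u a b : Fin n} (hab : a ≠ b)
    (hu : ∀ z, G.Adj u z ↔ z = a ∨ z = b) (d x : Fin n → ℝ) :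
    ((adjA G + diagonal d) *ᵥ x) u = x a + x b + d u * x u := by
  have hN : G.neighborFinset u = {a, b} := by ext z; simp [hu]
  rw [add_mulVec, Pi.add_apply, adjA_eq_adjMatrix, SimpleGraph.adjMatrix_mulVec_apply, hN,
    Finset.sum_pair hab, mulVec_diagonal]

end Bisection

theorem IsBisection.dotProduct_self {n : ℕ} {y : Fin n → ℝ} (hy : IsBisection y) :
    y ⬝ᵥ y = n := by
  have hsq : ∀ i, y i * y i = 1 := fun i => by rcases hy.1 i with h | h <;> simp [h]
  simp [dotProduct, hsq]

theorem cut_edge_test_bound {n : ℕ} (G : SimpleGraph (Fin n)) [DecidableRel G.Adj]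
    (d : Fin n → ℝ) {u' u w w' : Fin n}
    (hu : ∀ z, G.Adj u z ↔ z = u' ∨ z = w) (hw : ∀ z, G.Adj w z ↔ z = u ∨ z = w')
    {y : Fin n → ℝ} (hy : IsBisection y)
    (hyu : y u = 1) (hyu' : y u' = 1) (hyw : y w = -1) (hyw' : y w' = -1) :
    100 * (y ⬝ᵥ (adjA G + diagonal d) *ᵥ y) - 19 * (d u + d w) - 2 ≤
      lamS (adjA G + diagonal d) * (100 * n - 38) := by
  set B := adjA G + diagonal d
  have hB : B.IsSymm := isSymm_adjA_add_diagonal G d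
  have huw : u ≠ w := fun h => by norm_num [h, hyw] at hyu
  have hu'w : u' ≠ w := fun h => by norm_num [h, hyw] at hyu'
  have huw' : u ≠ w' := fun h => by norm_num [h, hyw'] at hyu
  have hu'u : u' ≠ u := (G.ne_of_adj ((hu u').2 (Or.inl rfl))).symm
  have hw'w : w' ≠ w := (G.ne_of_adj ((hw w').2 (Or.inr rfl))).symm
  have hrow_u : ∀ x, (B *ᵥ x) u = x u' + x w + d u * x u :=
    adjA_add_diagonal_mulVec_apply_of_adj_iff G hu'w hu d
  have hrow_w : ∀ x, (B *ᵥ x) w = x u + x w' + d w * x w :=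
    adjA_add_diagonal_mulVec_apply_of_adj_iff G huw' hw d
  set c : Fin n → ℝ := Pi.single w 1 - Pi.single u 1
  have hyBc : y ⬝ᵥ B *ᵥ c = -(d u + d w) := by
    rw [hB.dotProduct_mulVec_comm]
    simp [c, sub_dotProduct, hrow_u, hrow_w, hyu, hyu', hyw, hyw']
    ring
  have hcBc : c ⬝ᵥ B *ᵥ c = d u + d w - 2 := by
    simp [c, sub_dotProduct, hrow_u, hrow_w, huw, huw.symm, hu'w, hu'u, hw'w, huw'.symm]
    ring
  have hyc : y ⬝ᵥ c = -2 := by simp [c, dotProduct_sub, hyu, hyw]; norm_num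
  have hcc : c ⬝ᵥ c = 2 := by simp [c, dotProduct_sub, huw, huw.symm]; norm_num
  have h := dotProduct_mulVec_le_lamS_mul B (x := (10 : ℝ) • y + (1 : ℝ) • c)
    (by simp [c, Finset.sum_add_distrib, ← Finset.mul_sum, hy.2])
  rw [hB.dotProduct_mulVec_smul_add_smul, dotProduct_smul_add_smul_self, hyBc, hcBc, hyc, hcc,
    hy.dotProduct_self] at h
  linear_combination h

theorem degree_two_pair_test_bound {n : ℕ} (G : SimpleGraph (Fin n)) [DecidableRel G.Adj]
    (d : Fin n → ℝ) {u' u w w' : Fin n}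
    (hu : ∀ z, G.Adj u z ↔ z = u' ∨ z = w) (hw : ∀ z, G.Adj w z ↔ z = u ∨ z = w')
    (hu'w : u' ≠ w) (huw' : u ≠ w') :
    n ^ 2 * (d u + d w + 2) - 4 * n * (d u + d w + 4) + 4 * (1 ⬝ᵥ (adjA G + diagonal d) *ᵥ 1) ≤
      lamS (adjA G + diagonal d) * (2 * n ^ 2 - 4 * n) := by
  set B := adjA G + diagonal d
  have hB : B.IsSymm := isSymm_adjA_add_diagonal G d
  have huw : u ≠ w := G.ne_of_adj ((hu w).2 (Or.inr rfl))
  have hu'u : u' ≠ u := (G.ne_of_adj ((hu u').2 (Or.inl rfl))).symm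
  have hw'w : w' ≠ w := (G.ne_of_adj ((hw w').2 (Or.inr rfl))).symm
  have hrow_u : ∀ x, (B *ᵥ x) u = x u' + x w + d u * x u :=
    adjA_add_diagonal_mulVec_apply_of_adj_iff G hu'w hu d
  have hrow_w : ∀ x, (B *ᵥ x) w = x u + x w' + d w * x w :=
    adjA_add_diagonal_mulVec_apply_of_adj_iff G huw' hw d
  set p : Fin n → ℝ := Pi.single u 1 + Pi.single w 1
  have hpBp : p ⬝ᵥ B *ᵥ p = d u + d w + 2 := by
    simp [p, add_dotProduct, hrow_u, hrow_w, huw, huw.symm, hu'w, hu'u, hw'w, huw'.symm]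
    ring
  have hpB1 : p ⬝ᵥ B *ᵥ 1 = d u + d w + 4 := by
    simp [p, add_dotProduct, hrow_u, hrow_w]
    ring
  have hpp : p ⬝ᵥ p = 2 := by simp [p, dotProduct_add, huw, huw.symm]; norm_num
  have hp1 : p ⬝ᵥ 1 = 2 := by simp [p, add_dotProduct]; norm_num
  have h := dotProduct_mulVec_le_lamS_mul B (x := (n : ℝ) • p + (-2 : ℝ) • 1)
    (by simp [p, Finset.sum_add_distrib, ← Finset.mul_sum]; ring)
  rw [hB.dotProduct_mulVec_smul_add_smul, dotProduct_smul_add_smul_self, hpBp, hpB1, hpp, hp1,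
    one_dotProduct_one, Fintype.card_fin] at h
  linear_combination h

theorem path_on_cut_forces_fail_general {n : ℕ}
    (hn10 : 10 ≤ n)
    (G : SimpleGraph (Fin n)) [DecidableRel G.Adj]
    (u' u w w' : Fin n)
    (hu : ∀ z, G.Adj u z ↔ z = u' ∨ z = w)
    (hw : ∀ z, G.Adj w z ↔ z = u ∨ z = w')
    (y : Fin n → ℝ) (hy : IsBisection y) (hopt : cw G y = bw G)
    (hyu : y u = 1) (hyu' : y u' = 1) (hyw : y w = -1) (hyw' : y w' = -1) :
    hB G < bw G := by
  have hu'w : u' ≠ w := fun h => by norm_num [h, hyw] at hyu'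
  have huw' : u ≠ w' := fun h => by norm_num [h, hyw'] at hyu
  have hgap : ∀ d, gB G d ≤ bw G - 1 / 400 := fun d => by
    have hcw := cw_eq G d hy.1
    have hcw_nonneg := cw_nonneg G hy.1
    have := rayleigh_gap_of_test_bounds (by exact_mod_cast hn10) (by linarith)
      (cut_edge_test_bound G d hu hw hy hyu hyu' hyw hyw')
      (degree_two_pair_test_bound G d hu hw hu'w huw')
    rw [gB_eq, ← hopt, hcw]
    linarith
  have hle : hB G ≤ bw G - 1 / 400 :=
    csSup_le ⟨gB G 0, 0, rfl⟩ (by rintro r ⟨d, rfl⟩; exact hgap d)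
  linarith

/-- a path segment `u' - u - w - w'` lying on an optimum
bisection (with `u`, `w` of degree two and `{u,w}` a cut edge) forces
`h(G) < bw(G)`. -/
theorem path_on_cut_forces_fail {n : ℕ} (hn2 : 2 ≤ n) (hne : Even n)
    (hn10 : 10 ≤ n)
    (G : SimpleGraph (Fin n)) [DecidableRel G.Adj]
    (u' u w w' : Fin n)
    (e1 : G.Adj u' u) (e2 : G.Adj u w) (e3 : G.Adj w w')
    (hu : ∀ z, G.Adj u z ↔ z = u' ∨ z = w)
    (hw : ∀ z, G.Adj w z ↔ z = u ∨ z = w')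
    (y : Fin n → ℝ) (hy : IsBisection y) (hopt : cw G y = bw G)
    (hyu : y u = 1) (hyu' : y u' = 1) (hyw : y w = -1) (hyw' : y w' = -1) :
    hB G < bw G :=
  path_on_cut_forces_fail_general hn10 G u' u w w' hu hw y hy hopt hyu hyu' hyw hyw'
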